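/- Assume the periodic perforations, Assumption (A2) and the boundary-measure bound as described in the context, where (𝒪_k)_{k∈ℤ^d} is any family of subsets of ℝ^d satisfying (A2). Then ∑_{k∈ℤ^d} vol(𝒪_k Δ 𝒪_k^per) < ∞, where vol denotes Lebesgue measure and A Δ B = (A ∖ B) ∪ (B ∖ A) is the symmetric difference. -/

import Mathlib

/-!
By (A2), every point of `𝒪_k Δ 𝒪_k^per` lies within distance `α_k` of `∂𝒪_k^per`, which is the
translate of `∂𝒪_0^per` by `k`. Hence the `k`-th term is at most the measure of the closed
`α_k`-neighbourhood of `∂𝒪_0^per`: this is at most `C̄ α_k` as soon as `α_k < ᾱ`, which holds for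
all but finitely many `k` because `α_k → 0`, and it is finite for the remaining `k` because
`∂𝒪_0^per` is bounded.
-/

open MeasureTheory Metric Set Filter Topology Asymptotics RealInnerProductSpace Pointwise

noncomputable section

abbrev Euc (d : ℕ) := EuclideanSpace ℝ (Fin d)

def unitCube (d : ℕ) : Set (Euc d) := {x | ∀ i, x i ∈ Set.Ioo (0:ℝ) 1}

def closedUnitCube (d : ℕ) : Set (Euc d) := {x | ∀ i, x i ∈ Set.Icc (0:ℝ) 1}

def box {d : ℕ} (a b : Fin d → ℝ) : Set (Euc d) := {x | ∀ i, x i ∈ Set.Icc (a i) (b i)}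

def cell (d : ℕ) (k : Fin d → ℤ) : Set (Euc d) := {x | ∀ i, x i - (k i : ℝ) ∈ Set.Ioo (0:ℝ) 1}

def perHole {d : ℕ} (Oper : Set (Euc d)) (k : Fin d → ℤ) : Set (Euc d) :=
  {x | (show Euc d from WithLp.toLp 2 (fun i => x i - (k i : ℝ))) ∈ Oper}

def perHoles {d : ℕ} (Oper : Set (Euc d)) : Set (Euc d) := ⋃ k : Fin d → ℤ, perHole Oper k

def holes {d : ℕ} (O : (Fin d → ℤ) → Set (Euc d)) : Set (Euc d) := ⋃ k, O k

def perPlus {d : ℕ} (Oper : Set (Euc d)) (k : Fin d → ℤ) (a : ℝ) : Set (Euc d) :=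
  {x | Metric.infDist x (perHole Oper k) < a}

def perMinus {d : ℕ} (Oper : Set (Euc d)) (k : Fin d → ℤ) (a : ℝ) : Set (Euc d) :=
  {x ∈ perHole Oper k | a < Metric.infDist x (frontier (perHole Oper k))}

def lap {d : ℕ} (w : Euc d → ℝ) (x : Euc d) : ℝ :=
  ∑ i, fderiv ℝ (fun y => fderiv ℝ w y (EuclideanSpace.single i 1)) x (EuclideanSpace.single i 1)

theorem frontier_vadd {α G : Type*} [TopologicalSpace α] [AddGroup G] [AddAction G α]
    [ContinuousConstVAdd G α] (c : G) (s : Set α) : frontier (c +ᵥ s) = c +ᵥ frontier s := by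
  simp only [frontier, closure_vadd, interior_vadd, vadd_set_sdiff]

theorem Metric.cthickening_vadd {α G : Type*} [PseudoEMetricSpace α] [AddGroup G] [AddAction G α]
    [IsIsometricVAdd G α] (δ : ℝ) (c : G) (s : Set α) :
    cthickening δ (c +ᵥ s) = c +ᵥ cthickening δ s := by
  ext x
  rw [mem_vadd_set_iff_neg_vadd_mem, mem_cthickening_iff, mem_cthickening_iff,
    ← infEDist_vadd (-c), neg_vadd_vadd]

theorem Metric.measure_cthickening_le_of_measure_infDist_lt_le {X : Type*} [PseudoMetricSpace X]
    [MeasurableSpace X] (μ : Measure X) {F : Set X} {C a₀ t : ℝ} (ht : 0 ≤ t) (hta : t < a₀)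
    (h : ∀ a : ℝ, 0 < a → a < a₀ → μ {x | infDist x F < a} ≤ ENNReal.ofReal (C * a)) :
    μ (cthickening t F) ≤ ENNReal.ofReal (C * t) := by
  have hlim : Tendsto (fun a => ENNReal.ofReal (C * a)) (𝓝[>] t) (𝓝 (ENNReal.ofReal (C * t))) :=
    ((ENNReal.continuous_ofReal.comp (continuous_const_mul C)).tendsto t).mono_left
      nhdsWithin_le_nhds
  refine ge_of_tendsto hlim ?_
  filter_upwards [Ioo_mem_nhdsGT hta] with a ⟨hat, ha₀⟩
  have hsub : cthickening t F ⊆ {x | infDist x F < a} := fun x hx =>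
    have hx' := cthickening_subset_thickening' (ht.trans_lt hat) hat F hx
    (mem_thickening_iff_infDist_lt (thickening_nonempty_iff.1 ⟨x, hx'⟩).2).1 hx'
  exact (measure_mono hsub).trans (h a (ht.trans_lt hat) ha₀)

theorem symmDiff_subset_cthickening_frontier {E : Type*} [NormedAddCommGroup E] [NormedSpace ℝ E]
    [FiniteDimensional ℝ E] {s O : Set E} {a : ℝ} (hs : (frontier s).Nonempty)
    (hinner : {x ∈ s | a < infDist x (frontier s)} ⊆ O) (houter : O ⊆ {x | infDist x s < a}) :
    symmDiff O s ⊆ cthickening a (frontier s) := by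
  rintro x (⟨hxO, hxs⟩ | ⟨hxs, hxO⟩)
  · obtain ⟨y, hy, hxy⟩ := exists_mem_frontier_infDist_compl_eq_dist (s := sᶜ) hxs
      (compl_ne_univ.2 (closure_nonempty_iff.1 (hs.mono frontier_subset_closure)))
    rw [frontier_compl] at hy
    rw [compl_compl] at hxy
    exact mem_cthickening_of_dist_le x y a _ hy (hxy ▸ (houter hxO).le)
  · obtain ⟨y, hy, hxy⟩ := isClosed_frontier.exists_infDist_eq_dist hs x
    exact mem_cthickening_of_dist_le x y a _ hy (hxy ▸ not_lt.1 fun h => hxO (hinner ⟨hxs, h⟩))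

theorem ENNReal.tsum_lt_top_of_eventually_le_ofReal {ι : Type*} {f : ι → ENNReal} {g : ι → ℝ}
    (hf : ∀ i, f i ≠ ⊤) (hg : Summable g) (hfg : ∀ᶠ i in cofinite, f i ≤ ENNReal.ofReal (g i)) :
    ∑' i, f i < ⊤ := by
  have hsum : Summable fun i => (f i).toReal := by
    refine hg.norm.of_norm_bounded_eventually (hfg.mono fun i hi => ?_)
    rw [Real.norm_of_nonneg ENNReal.toReal_nonneg, Real.norm_eq_abs]
    calc (f i).toReal ≤ (ENNReal.ofReal (g i)).toReal :=
          ENNReal.toReal_mono ENNReal.ofReal_ne_top hi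
      _ = max (g i) 0 := ENNReal.toReal_ofReal'
      _ ≤ |g i| := max_le (le_abs_self _) (abs_nonneg _)
  calc ∑' i, f i = ∑' i, ENNReal.ofReal (f i).toReal := by simp only [ENNReal.ofReal_toReal (hf _)]
    _ = ENNReal.ofReal (∑' i, (f i).toReal) :=
      (ENNReal.ofReal_tsum_of_nonneg (fun _ => ENNReal.toReal_nonneg) hsum).symm
    _ < ⊤ := ENNReal.ofReal_lt_top

theorem isBounded_unitCube (d : ℕ) : Bornology.IsBounded (unitCube d) :=
  ((PiLp.antilipschitzWith_ofLp 2 _).isBounded_preimage (isBounded_Icc (0 : Fin d → ℝ) 1)).subset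
    fun _ hx => ⟨fun i => (hx i).1.le, fun i => (hx i).2.le⟩

theorem zero_notMem_unitCube {d : ℕ} (hd : 0 < d) : (0 : Euc d) ∉ unitCube d :=
  fun h => (lt_irrefl 0) (h ⟨0, hd⟩).1

theorem perHole_eq_vadd {d : ℕ} (Oper : Set (Euc d)) (k : Fin d → ℤ) :
    perHole Oper k = WithLp.toLp 2 (fun i => (k i : ℝ)) +ᵥ Oper := by
  ext x
  rw [mem_vadd_set_iff_neg_vadd_mem, vadd_eq_add, neg_add_eq_sub]
  rfl

theorem symmDiff_volume_summable_general (d : ℕ) (hd : 2 ≤ d)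
    (Oper : Set (Euc d)) (hOperNe : Oper.Nonempty)
    (hOperQ : closure Oper ⊆ unitCube d)
    (O : (Fin d → ℤ) → Set (Euc d))
    (α : (Fin d → ℤ) → ℝ) (hαpos : ∀ k, 0 ≤ α k) (hαsum : Summable α)
    (hA2 : ∀ k, perMinus Oper k (α k) ⊆ O k ∧ O k ⊆ perPlus Oper k (α k))
    (Cb ab : ℝ) (hab : 0 < ab)
    (hFederer : ∀ a : ℝ, 0 < a → a < ab →
      volume {x : Euc d | Metric.infDist x (frontier Oper) < a} ≤ ENNReal.ofReal (Cb * a)) :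
    ∑' k : Fin d → ℤ, volume (symmDiff (O k) (perHole Oper k)) < ⊤ := by
  set F := frontier Oper
  have hF : F.Nonempty := by
    refine nonempty_frontier_iff.2 ⟨hOperNe, fun h => zero_notMem_unitCube (by omega : 0 < d) ?_⟩
    rw [h, closure_univ] at hOperQ
    exact hOperQ (mem_univ 0)
  have hFbdd : Bornology.IsBounded F :=
    (isBounded_unitCube d).subset (frontier_subset_closure.trans hOperQ)
  have hcell : ∀ k, volume (symmDiff (O k) (perHole Oper k)) ≤ volume (cthickening (α k) F) := by
    intro k
    have hk : frontier (perHole Oper k) = WithLp.toLp 2 (fun i => (k i : ℝ)) +ᵥ F := by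
      rw [perHole_eq_vadd, frontier_vadd]
    calc volume (symmDiff (O k) (perHole Oper k))
        ≤ volume (cthickening (α k) (frontier (perHole Oper k))) :=
          measure_mono (symmDiff_subset_cthickening_frontier (hk ▸ hF.vadd_set) (hA2 k).1 (hA2 k).2)
      _ = volume (cthickening (α k) F) := by rw [hk, cthickening_vadd, measure_vadd]
  refine (ENNReal.tsum_le_tsum hcell).trans_lt (ENNReal.tsum_lt_top_of_eventually_le_ofReal
    (fun k => hFbdd.cthickening.measure_lt_top.ne) (hαsum.mul_left Cb) ?_)
  filter_upwards [hαsum.tendsto_cofinite_zero.eventually_lt_const hab] with k hk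
  exact measure_cthickening_le_of_measure_infDist_lt_le volume (hαpos k) hk hFederer

/-- summability of the measures of the symmetric differences
`𝒪_k Δ 𝒪_k^per` (first assertion of Lemma A.1 of the paper). -/
theorem symmDiff_volume_summable (d : ℕ) (hd : 2 ≤ d)
    (Oper : Set (Euc d)) (hOperOpen : IsOpen Oper) (hOperNe : Oper.Nonempty)
    (hOperQ : closure Oper ⊆ unitCube d)
    (O : (Fin d → ℤ) → Set (Euc d))
    (α : (Fin d → ℤ) → ℝ) (hαpos : ∀ k, 0 ≤ α k) (hαsum : Summable α)
    (hA2 : ∀ k, perMinus Oper k (α k) ⊆ O k ∧ O k ⊆ perPlus Oper k (α k))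
    (Cb ab : ℝ) (hCb : 0 < Cb) (hab : 0 < ab)
    (hFederer : ∀ a : ℝ, 0 < a → a < ab →
      volume {x : Euc d | Metric.infDist x (frontier Oper) < a} ≤ ENNReal.ofReal (Cb * a)) :
    ∑' k : Fin d → ℤ, volume (symmDiff (O k) (perHole Oper k)) < ⊤ :=
  symmDiff_volume_summable_general d hd Oper hOperNe hOperQ O α hαpos hαsum hA2 Cb ab hab hFederer
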